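/- arXiv:math/0304123 — 2 statements merged into one kernel-verified Lean document; each statement's English description precedes it below -/
import Mathlib

section
/- Let u be a positive element of a lattice-ordered abelian group G, and let A = (a₁,…,aₙ) and B = (b₁,…,bₘ) be finite families of nonnegative elements with a₁ + ⋯ + aₙ = u and b₁ + ⋯ + bₘ = u. Then there exists a matrix (c_{ij}) of nonnegative elements of G such that for every i, Σⱼ c_{ij} = aᵢ, and for every j, Σᵢ c_{ij} = bⱼ. -/
section Aux
variable {G : Type*} [Lattice G] [AddCommGroup G]
    [CovariantClass G G (· + ·) (· ≤ ·)]

lemma my_sum_nonneg {ι : Type*} (s : Finset ι) (f : ι → G)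
    (h : ∀ i ∈ s, 0 ≤ f i) : 0 ≤ ∑ i ∈ s, f i :=
  Finset.sum_induction f (0 ≤ ·) (fun _ _ => add_nonneg) le_rfl h

lemma my_le_sum {ι : Type*} [DecidableEq ι] (s : Finset ι) (f : ι → G)
    (h : ∀ i ∈ s, 0 ≤ f i) {j : ι} (hj : j ∈ s) : f j ≤ ∑ i ∈ s, f i := by
  rw [← Finset.sum_erase_add s f hj]
  exact le_add_of_nonneg_left
    (my_sum_nonneg _ _ fun i hi => h i (Finset.mem_of_mem_erase hi))

end Aux

/-- Riesz decomposition: if `0 ≤ x ≤ ∑ b j` with each `b j ≥ 0`, then `x`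
splits as a sum of pieces below the `b j`. -/
lemma riesz_decomp {G : Type*} [Lattice G] [AddCommGroup G]
    [CovariantClass G G (· + ·) (· ≤ ·)] :
    ∀ {m : ℕ} (b : Fin m → G), (∀ j, 0 ≤ b j) → ∀ x : G, 0 ≤ x → x ≤ ∑ j, b j →
    ∃ c : Fin m → G, (∀ j, 0 ≤ c j) ∧ (∀ j, c j ≤ b j) ∧ ∑ j, c j = x := by
  intro m
  induction m with
  | zero =>
    intro b _ x hx hxs
    simp only [Finset.univ_eq_empty, Finset.sum_empty] at hxs
    exact ⟨fun j => 0, by simp, by simp, by simp [le_antisymm hxs hx]⟩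
  | succ m ih =>
    intro b hb x hx hxs
    rw [Fin.sum_univ_succ] at hxs
    -- first piece: x ⊓ b 0
    set c0 : G := x ⊓ b 0 with hc0
    have hc0nn : 0 ≤ c0 := le_inf hx (hb 0)
    have hc0le : c0 ≤ b 0 := inf_le_right
    have hrest_nn : 0 ≤ x - c0 := by
      simp only [hc0, sub_nonneg]; exact inf_le_left
    have hrest_le : x - c0 ≤ ∑ j, b (Fin.succ j) := by
      rw [sub_le_iff_le_add]
      have hnn : (0 : G) ≤ ∑ j, b (Fin.succ j) := my_sum_nonneg _ _ fun j _ => hb _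
      have h1 : x ≤ (∑ j, b (Fin.succ j)) + x := le_add_of_nonneg_left hnn
      have h2 : x ≤ (∑ j, b (Fin.succ j)) + b 0 := by
        rwa [add_comm (b 0)] at hxs
      calc x ≤ ((∑ j, b (Fin.succ j)) + x) ⊓ ((∑ j, b (Fin.succ j)) + b 0) :=
              le_inf h1 h2
        _ = (∑ j, b (Fin.succ j)) + c0 := by rw [← add_inf]
    obtain ⟨c', hc'nn, hc'le, hc'sum⟩ := ih (fun j => b (Fin.succ j))
      (fun j => hb _) (x - c0) hrest_nn hrest_le
    refine ⟨Fin.cons c0 c', ?_, ?_, ?_⟩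
    · intro j; refine Fin.cases ?_ ?_ j <;> simp [hc0nn, hc'nn]
    · intro j; refine Fin.cases ?_ ?_ j <;> simp [hc0le, hc'le]
    · rw [Fin.sum_univ_succ]; simp [hc'sum]

/-- Auxiliary: common refinement with matching sums. -/
lemma common_refinement_aux {G : Type*} [Lattice G] [AddCommGroup G]
    [CovariantClass G G (· + ·) (· ≤ ·)] {m : ℕ} :
    ∀ {n : ℕ} (a : Fin n → G) (b : Fin m → G), (∀ i, 0 ≤ a i) → (∀ j, 0 ≤ b j) →
    ∑ i, a i = ∑ j, b j →
    ∃ c : Fin n → Fin m → G, (∀ i j, 0 ≤ c i j) ∧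
      (∀ i, ∑ j, c i j = a i) ∧ (∀ j, ∑ i, c i j = b j) := by
  intro n
  induction n with
  | zero =>
    intro a b ha hb hs
    refine ⟨fun i j => 0, by simp, fun i => i.elim0, fun j => ?_⟩
    simp only [Finset.univ_eq_empty, Finset.sum_empty]
    have h0 : ∑ j, b j = 0 := by rw [← hs]; simp
    have hle : b j ≤ 0 := h0 ▸ my_le_sum _ _ (fun j _ => hb j) (Finset.mem_univ j)
    exact (le_antisymm hle (hb j)).symm
  | succ n ih =>
    intro a b ha hb hs
    rw [Fin.sum_univ_succ] at hs
    have hnn : (0 : G) ≤ ∑ i, a (Fin.succ i) := my_sum_nonneg _ _ fun i _ => ha _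
    have ha0 : a 0 ≤ ∑ j, b j := by
      rw [← hs]; exact le_add_of_nonneg_right hnn
    obtain ⟨c0, hc0nn, hc0le, hc0sum⟩ := riesz_decomp b hb (a 0) (ha 0) ha0
    have hsb' : ∑ i, a (Fin.succ i) = ∑ j, (b j - c0 j) := by
      rw [Finset.sum_sub_distrib, hc0sum, ← hs]; abel
    obtain ⟨c', hc'nn, hc'row, hc'col⟩ := ih (fun i => a (Fin.succ i))
      (fun j => b j - c0 j) (fun i => ha _) (fun j => sub_nonneg.2 (hc0le j)) hsb'
    refine ⟨Fin.cons c0 c', ?_, ?_, ?_⟩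
    · intro i; refine Fin.cases ?_ ?_ i <;> simp [hc0nn, hc'nn]
    · intro i; refine Fin.cases ?_ ?_ i <;> simp [hc0sum, hc'row]
    · intro j
      rw [Fin.sum_univ_succ]
      simp only [Fin.cons_succ, Fin.cons_zero]
      rw [hc'col j]; abel

/-- Any two partitions of the same element `u` admit a common refinement. -/
theorem common_refinement_exists {G : Type*} [Lattice G] [AddCommGroup G]
    [CovariantClass G G (· + ·) (· ≤ ·)]
    (u : G) (hu : 0 < u) {n m : ℕ} (a : Fin n → G) (b : Fin m → G)
    (ha : ∀ i, 0 ≤ a i) (hb : ∀ j, 0 ≤ b j)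
    (hsa : ∑ i, a i = u) (hsb : ∑ j, b j = u) :
    ∃ c : Fin n → Fin m → G, (∀ i j, 0 ≤ c i j) ∧
      (∀ i, ∑ j, c i j = a i) ∧ (∀ j, ∑ i, c i j = b j) :=
  common_refinement_aux a b ha hb (by rw [hsa, hsb])
end

section
/- Let (M, m, τ) be a dynamical system on an MV-algebra and A a partition of unity. Define Hₙ(A,τ) = inf{ H(C) : C is a common refinement of A, τ(A), …, τ^{n-1}(A) }. Then the sequence is subadditive: H_{n+m}(A,τ) ≤ Hₙ(A,τ) + H_m(A,τ) for all n, m ≥ 1; consequently lim_{n→∞} (1/n)·Hₙ(A,τ) exists. -/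
open Real Filter

/-- A partition of the unit `u` in the MV-algebra `M = Γ(G,u) = [0,u] ⊆ G`. -/
def IsPartition {G : Type*} [Lattice G] [AddCommGroup G] (u : G) {n : ℕ}
    (a : Fin n → G) : Prop :=
  (∀ i, a i ∈ Set.Icc 0 u) ∧ ∑ i, a i = u

/-- `c` refines the partition `p`: every element of `p` is the sum of a subfamily
of `c`, these subfamilies partitioning the index set of `c`. -/
def Refines {G : Type*} [Lattice G] [AddCommGroup G] {N k : ℕ}
    (c : Fin N → G) (p : Fin k → G) : Prop :=
  ∃ f : Fin N → Fin k, ∀ j, p j = ∑ i ∈ Finset.univ.filter (fun i => f i = j), c i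

/-- Entropy of a partition with respect to a state `m`. -/
noncomputable def Ent {G : Type*} (m : G → ℝ) {n : ℕ} (a : Fin n → G) : ℝ :=
  ∑ i, negMulLog (m (a i))

/-- `Hₙ(A,τ)`: the infimum of the entropies of common refinements of
`A, τ(A), …, τⁿ⁻¹(A)`. -/
noncomputable def Hn {G : Type*} [Lattice G] [AddCommGroup G]
    (u : G) (m : G → ℝ) (τ : G → G) {k : ℕ} (a : Fin k → G) (n : ℕ) : ℝ :=
  sInf { h : ℝ | ∃ (N : ℕ) (c : Fin N → G), IsPartition u c ∧
    (∀ l < n, Refines c (fun i => τ^[l] (a i))) ∧ h = Ent m c }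

/-!
Two partitions of unity `c`, `d` of `Γ(G,u)` have a common refinement `e` with
`H(e) ≤ H(c) + H(d)`: the partial sums `Sᵢ` of `c` and `Tⱼ` of `d` are chains from `0` to `u`,
and the mixed differences of `(i, j) ↦ Sᵢ ⊓ Tⱼ` form a nonnegative matrix with row sums `c` and
column sums `d` (the infimum is supermodular in an ℓ-group). Under `m` this matrix is a joint
distribution with marginals `m ∘ c` and `m ∘ d`, so its entropy is at most the sum of theirs.
Since `τⁿ` carries a common refinement of `A, …, τ^{n'-1}A` to one of `τⁿA, …, τ^{n+n'-1}A` of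
the same entropy, refining it jointly with a common refinement of `A, …, τ^{n-1}A` gives
`H_{n+n'} ≤ Hₙ + H_{n'}`. As `Hₙ ≥ 0`, Fekete's lemma gives the limit of `Hₙ / n`.
-/

open Finset Set Function

theorem sum_sum_negMulLog_le_add {ι κ : Type*} [Fintype ι] [Fintype κ] (p : ι → κ → ℝ)
    (hp : ∀ i j, 0 ≤ p i j) (hsum : ∑ i, ∑ j, p i j = 1) :
    ∑ i, ∑ j, negMulLog (p i j) ≤
      ∑ i, negMulLog (∑ j, p i j) + ∑ j, negMulLog (∑ i, p i j) := by
  -- `H(X,Y) = H(X) + H(Y | X)`, and `H(Y | X) ≤ H(Y)` by concavity of `negMulLog`.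
  set r : ι → ℝ := fun i => ∑ j, p i j
  have hr : ∀ i, 0 ≤ r i := fun i => sum_nonneg fun j _ => hp i j
  have hrp : ∀ i j, r i * (p i j / r i) = p i j := by
    intro i j
    rcases (hr i).eq_or_lt with h0 | hpos
    · have : p i j ≤ r i := single_le_sum (fun j _ => hp i j) (mem_univ j)
      rw [← h0, zero_mul]; linarith [hp i j]
    · exact mul_div_cancel₀ _ hpos.ne'
  have chain_rule : ∀ i, ∑ j, negMulLog (p i j) =
      negMulLog (r i) + ∑ j, r i * negMulLog (p i j / r i) := by
    intro i
    rcases (hr i).eq_or_lt with h0 | hpos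
    · have hz : ∀ j, p i j = 0 := fun j => by rw [← hrp i j, ← h0, zero_mul]
      simp only [hz, ← h0, negMulLog_zero, zero_mul, sum_const_zero, add_zero]
    · calc ∑ j, negMulLog (p i j)
          = ∑ j, (p i j / r i * negMulLog (r i) + r i * negMulLog (p i j / r i)) := by
            refine sum_congr rfl fun j _ => ?_
            rw [← negMulLog_mul, hrp]
        _ = _ := by rw [sum_add_distrib, ← sum_mul, ← sum_div, div_self hpos.ne', one_mul]
  have jensen : ∀ j, ∑ i, r i * negMulLog (p i j / r i) ≤ negMulLog (∑ i, p i j) := by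
    intro j
    have := concaveOn_negMulLog.le_map_sum (t := univ) (fun i _ => hr i) hsum
      (fun i _ => div_nonneg (hp i j) (hr i))
    simpa only [smul_eq_mul, hrp] using this
  calc ∑ i, ∑ j, negMulLog (p i j)
      = ∑ i, negMulLog (r i) + ∑ j, ∑ i, r i * negMulLog (p i j / r i) := by
        rw [sum_congr rfl fun i _ => chain_rule i, sum_add_distrib, sum_comm]
    _ ≤ _ := add_le_add_right (sum_le_sum fun j _ => jensen j) _

section LatticeOrderedGroup

variable {G : Type*} [Lattice G] [AddCommGroup G]

/-- The mass of the cell `(i, j)` for the "distribution function" `(x, y) ↦ S x ⊓ T y`. -/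
def infRectDiff (S T : ℕ → G) (i j : ℕ) : G :=
  S (i + 1) ⊓ T (j + 1) - S (i + 1) ⊓ T j - S i ⊓ T (j + 1) + S i ⊓ T j

theorem infRectDiff_swap (S T : ℕ → G) (i j : ℕ) :
    infRectDiff T S j i = infRectDiff S T i j := by
  simp only [infRectDiff, inf_comm (T _)]
  abel

theorem sum_infRectDiff {S T : ℕ → G} {i n : ℕ} (hS : S i ≤ S (i + 1)) (h₀ : T 0 ≤ S i)
    (hn : S (i + 1) ≤ T n) : ∑ j : Fin n, infRectDiff S T i j = S (i + 1) - S i := by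
  have telescope := sum_range_sub (fun j => S (i + 1) ⊓ T j - S i ⊓ T j) n
  rw [inf_eq_left.2 hn, inf_eq_left.2 (hS.trans hn), inf_eq_right.2 (h₀.trans hS),
    inf_eq_right.2 h₀, sub_self, sub_zero] at telescope
  rw [Fin.sum_univ_eq_sum_range (infRectDiff S T i), ← telescope]
  refine sum_congr rfl fun j _ => ?_
  rw [infRectDiff]; abel

variable [IsOrderedAddMonoid G]

theorem inf_add_inf_le_inf_add_inf {s s' t t' : G} (hs : s ≤ s') (ht : t ≤ t') :
    s ⊓ t' + s' ⊓ t ≤ s ⊓ t + s' ⊓ t' := by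
  have : s ⊓ t + s' ⊓ t' = (s + s') ⊓ (s + t') ⊓ ((t + s') ⊓ (t + t')) := by
    rw [inf_add, add_inf, add_inf, inf_inf_inf_comm]
  rw [this, add_comm t, add_comm t]
  exact le_inf (le_inf (add_le_add inf_le_left inf_le_left)
      (add_le_add inf_le_left (inf_le_right.trans ht)))
    (le_inf (add_le_add (inf_le_left.trans hs) inf_le_right)
      (add_le_add inf_le_right inf_le_right))

theorem infRectDiff_nonneg {S T : ℕ → G} (hS : Monotone S) (hT : Monotone T) (i j : ℕ) :
    0 ≤ infRectDiff S T i j := by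
  have : infRectDiff S T i j = (S i ⊓ T j + S (i + 1) ⊓ T (j + 1)) -
      (S i ⊓ T (j + 1) + S (i + 1) ⊓ T j) := by
    rw [infRectDiff]; abel
  rw [this, sub_nonneg]
  exact inf_add_inf_le_inf_add_inf (hS i.le_succ) (hT j.le_succ)

theorem exists_monotone_partialSum {n : ℕ} (f : Fin n → G) (hf : ∀ i, 0 ≤ f i) :
    ∃ S : ℕ → G, Monotone S ∧ S 0 = 0 ∧ S n = ∑ i, f i ∧
      ∀ i : Fin n, S (i + 1) - S i = f i := by
  let g : ℕ → G := fun k => if h : k < n then f ⟨k, h⟩ else 0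
  have hg : ∀ i : Fin n, g i = f i := fun i => dif_pos i.2
  have hg₀ : ∀ k, 0 ≤ g k := fun k => by
    simp only [g]
    split_ifs
    exacts [hf _, le_rfl]
  refine ⟨fun k => ∑ i ∈ range k, g i,
    monotone_nat_of_le_succ fun k => by simpa [sum_range_succ] using hg₀ k, sum_range_zero _,
    (Fin.sum_univ_eq_sum_range g n).symm.trans (sum_congr rfl fun i _ => hg i), fun i => ?_⟩
  simp only [sum_range_succ, add_sub_cancel_left, hg]

theorem exists_nonneg_matrix_sum_eq {N N' : ℕ} {c : Fin N → G} {d : Fin N' → G}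
    (hc : ∀ i, 0 ≤ c i) (hd : ∀ j, 0 ≤ d j) (h : ∑ i, c i = ∑ j, d j) :
    ∃ E : Fin N → Fin N' → G, (∀ i j, 0 ≤ E i j) ∧ (∀ i, ∑ j, E i j = c i) ∧
      ∀ j, ∑ i, E i j = d j := by
  obtain ⟨S, hS, hS₀, hSN, hSc⟩ := exists_monotone_partialSum c hc
  obtain ⟨T, hT, hT₀, hTN, hTd⟩ := exists_monotone_partialSum d hd
  have hST : S N = T N' := hSN.trans (h.trans hTN.symm)
  refine ⟨fun i j => infRectDiff S T i j, fun i j => infRectDiff_nonneg hS hT i j,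
    fun i => ?_, fun j => ?_⟩
  · rw [sum_infRectDiff (hS i.val.le_succ) (hT₀.trans_le (hS₀ ▸ hS (Nat.zero_le _)))
      (hST ▸ hS i.2), hSc]
  · simp only [← infRectDiff_swap S T]
    rw [sum_infRectDiff (hT j.val.le_succ) (hS₀.trans_le (hT₀ ▸ hT (Nat.zero_le _)))
      (hST.symm ▸ hT j.2), hTd]

end LatticeOrderedGroup

section Partitions

variable {G : Type*} [Lattice G] [AddCommGroup G] {u : G}

def AddOnIcc {H : Type*} [Add H] (u : G) (σ : G → H) : Prop :=
  ∀ b c : G, b ∈ Icc 0 u → c ∈ Icc 0 u → b + c ∈ Icc 0 u → σ (b + c) = σ b + σ c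

theorem AddOnIcc.map_zero {H : Type*} [AddLeftCancelMonoid H] {σ : G → H} (hσ : AddOnIcc u σ)
    (hu : 0 ≤ u) : σ 0 = 0 := by
  have h₀ : (0 : G) ∈ Icc 0 u := ⟨le_rfl, hu⟩
  have := hσ 0 0 h₀ h₀ (by rwa [add_zero])
  rwa [add_zero, left_eq_add] at this

theorem AddOnIcc.comp {H : Type*} [Add H] {σ : G → H} {ρ : G → G} (hσ : AddOnIcc u σ)
    (hρ : AddOnIcc u ρ) (hρu : MapsTo ρ (Icc 0 u) (Icc 0 u)) : AddOnIcc u (σ ∘ ρ) :=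
  fun b c hb hc hbc => by
    rw [comp_apply, hρ b c hb hc hbc, hσ _ _ (hρu hb) (hρu hc) (hρ b c hb hc hbc ▸ hρu hbc)]
    rfl

structure IsState (u : G) (m : G → ℝ) : Prop where
  m_mem : ∀ a ∈ Icc 0 u, m a ∈ Icc (0 : ℝ) 1
  m_add : AddOnIcc u m
  m_unit : m u = 1

structure IsDynamicalSystem (u : G) (m : G → ℝ) (τ : G → G) : Prop extends IsState u m where
  τ_add : AddOnIcc u τ
  τ_mapsTo : MapsTo τ (Icc 0 u) (Icc 0 u)
  τ_unit : τ u = u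
  m_τ : ∀ a ∈ Icc 0 u, m (τ a) = m a

variable {m : G → ℝ} {τ : G → G} {k : ℕ} {a : Fin k → G}

theorem IsDynamicalSystem.iterate (hs : IsDynamicalSystem u m τ) :
    ∀ n, IsDynamicalSystem u m τ^[n]
  | 0 => ⟨hs.toIsState, fun _ _ _ _ _ => rfl, mapsTo_id _, rfl, fun _ _ => rfl⟩
  | n + 1 => by
    have ih := hs.iterate n
    rw [iterate_succ]
    exact ⟨hs.toIsState, ih.τ_add.comp hs.τ_add hs.τ_mapsTo, ih.τ_mapsTo.comp hs.τ_mapsTo,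
      by rw [comp_apply, hs.τ_unit, ih.τ_unit],
      fun a ha => (ih.m_τ _ (hs.τ_mapsTo ha)).trans (hs.m_τ a ha)⟩

def refinementEntropies (u : G) (m : G → ℝ) (τ : G → G) {k : ℕ} (a : Fin k → G) (n : ℕ) :
    Set ℝ :=
  { h : ℝ | ∃ (N : ℕ) (c : Fin N → G), IsPartition u c ∧
    (∀ l < n, Refines c (fun i => τ^[l] (a i))) ∧ h = Ent m c }

theorem Hn_eq_sInf (n : ℕ) : Hn u m τ a n = sInf (refinementEntropies u m τ a n) := rfl

theorem Ent_nonneg (hm : ∀ a ∈ Icc 0 u, m a ∈ Icc (0 : ℝ) 1) {N : ℕ}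
    {c : Fin N → G} (hc : IsPartition u c) : 0 ≤ Ent m c :=
  sum_nonneg fun i _ => negMulLog_nonneg (hm _ (hc.1 i)).1 (hm _ (hc.1 i)).2

theorem Ent_comp {σ : G → G} (hmσ : ∀ a ∈ Icc 0 u, m (σ a) = m a) {N : ℕ}
    {c : Fin N → G} (hc : IsPartition u c) : Ent m (σ ∘ c) = Ent m c :=
  sum_congr rfl fun i _ => congrArg negMulLog (hmσ _ (hc.1 i))

theorem refinementEntropies_bddBelow (hm : ∀ a ∈ Icc 0 u, m a ∈ Icc (0 : ℝ) 1) (n : ℕ) :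
    BddBelow (refinementEntropies u m τ a n) :=
  ⟨0, by rintro _ ⟨N, c, hc, -, rfl⟩; exact Ent_nonneg hm hc⟩

theorem Hn_nonneg (hm : ∀ a ∈ Icc 0 u, m a ∈ Icc (0 : ℝ) 1) (n : ℕ) : 0 ≤ Hn u m τ a n :=
  Real.sInf_nonneg fun _ ⟨_, _, hc, _, h⟩ => h ▸ Ent_nonneg hm hc

theorem Refines.trans {N N' k : ℕ} {e : Fin N → G} {c : Fin N' → G} {p : Fin k → G}
    (h₁ : Refines e c) (h₂ : Refines c p) : Refines e p := by
  obtain ⟨f, hf⟩ := h₁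
  obtain ⟨g, hg⟩ := h₂
  refine ⟨g ∘ f, fun j => ?_⟩
  rw [hg j, ← sum_fiberwise_of_maps_to (g := f) (t := univ.filter fun l => g l = j)
    (by simp)]
  refine sum_congr rfl fun l hl => (hf l).trans (sum_congr ?_ fun _ _ => rfl)
  ext i
  simp only [mem_filter] at hl ⊢
  grind

def flattenFin {α : Type*} {N N' : ℕ} (E : Fin N → Fin N' → α) : Fin (N * N') → α :=
  fun x => Function.uncurry E (finProdFinEquiv.symm x)

theorem sum_flattenFin {α β : Type*} [AddCommMonoid β] {N N' : ℕ} (E : Fin N → Fin N' → α)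
    (f : α → β) :
    ∑ x, f (flattenFin E x) = ∑ i, ∑ j, f (E i j) := by
  rw [← Fintype.sum_prod_type', ← finProdFinEquiv.symm.sum_comp]; rfl

theorem refines_flattenFin_rows {N N' : ℕ} (E : Fin N → Fin N' → G) :
    Refines (flattenFin E) (fun i => ∑ j, E i j) := by
  refine ⟨fun x => (finProdFinEquiv.symm x).1, fun i => ?_⟩
  simp only [sum_filter, flattenFin]
  rw [finProdFinEquiv.symm.sum_comp (fun q => if q.1 = i then Function.uncurry E q else 0),
    Fintype.sum_prod_type, sum_comm]
  simp

theorem refines_flattenFin_cols {N N' : ℕ} (E : Fin N → Fin N' → G) :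
    Refines (flattenFin E) (fun j => ∑ i, E i j) := by
  refine ⟨fun x => (finProdFinEquiv.symm x).2, fun j => ?_⟩
  simp only [sum_filter, flattenFin]
  rw [finProdFinEquiv.symm.sum_comp (fun q => if q.2 = j then Function.uncurry E q else 0),
    Fintype.sum_prod_type]
  simp

variable [IsOrderedAddMonoid G]

theorem AddOnIcc.map_sum {H : Type*} [AddCancelCommMonoid H] {σ : G → H} (hσ : AddOnIcc u σ)
    {ι : Type*} {s : Finset ι} {g : ι → G}    (hg : ∀ i ∈ s, 0 ≤ g i) (hs : ∑ i ∈ s, g i ≤ u) :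
    σ (∑ i ∈ s, g i) = ∑ i ∈ s, σ (g i) := by
  classical
  induction s using Finset.induction_on with
  | empty => simpa using hσ.map_zero (by simpa using hs)
  | insert i s hi ih =>
    rw [sum_insert hi] at hs ⊢
    rw [sum_insert hi]
    have hgi := hg i (mem_insert_self i s)
    have hrest : ∀ j ∈ s, 0 ≤ g j := fun j hj => hg j (mem_insert_of_mem hj)
    have hs₀ : 0 ≤ ∑ j ∈ s, g j := sum_nonneg hrest
    have hsu : ∑ j ∈ s, g j ≤ u := (le_add_of_nonneg_left hgi).trans hs
    rw [hσ _ _ ⟨hgi, (le_add_of_nonneg_right hs₀).trans hs⟩ ⟨hs₀, hsu⟩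
      ⟨add_nonneg hgi hs₀, hs⟩, ih hrest hsu]

theorem IsPartition.sum_le {N : ℕ} {c : Fin N → G} (hc : IsPartition u c)
    (s : Finset (Fin N)) :
    ∑ i ∈ s, c i ≤ u :=
  hc.2 ▸ sum_le_sum_of_subset_of_nonneg (subset_univ s) fun i _ _ => (hc.1 i).1

theorem IsPartition.map {N : ℕ} {c : Fin N → G} (hc : IsPartition u c) {σ : G → G}
    (hσ : AddOnIcc u σ) (hσu : MapsTo σ (Icc 0 u) (Icc 0 u)) (hσ₁ : σ u = u) :
    IsPartition u (σ ∘ c) :=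
  ⟨fun i => hσu (hc.1 i), by
    rw [← hσ₁, ← hc.2, hσ.map_sum (fun i _ => (hc.1 i).1) (hc.sum_le univ)]; rfl⟩

theorem Refines.map {N k : ℕ} {c : Fin N → G} {p : Fin k → G} (h : Refines c p)
    (hc : IsPartition u c) {σ : G → G} (hσ : AddOnIcc u σ) : Refines (σ ∘ c) (σ ∘ p) := by
  obtain ⟨f, hf⟩ := h
  exact ⟨f, fun j => by
    rw [comp_apply, hf j, hσ.map_sum (fun i _ => (hc.1 i).1) (hc.sum_le _)]; rfl⟩

theorem IsPartition.exists_common_refinement (hm : IsState u m) {N N' : ℕ}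
    {c : Fin N → G} {d : Fin N' → G} (hc : IsPartition u c) (hd : IsPartition u d) :
    ∃ (M : ℕ) (e : Fin M → G), IsPartition u e ∧ Refines e c ∧ Refines e d ∧
      Ent m e ≤ Ent m c + Ent m d := by
  obtain ⟨E, hE₀, hrow, hcol⟩ :=
    exists_nonneg_matrix_sum_eq (fun i => (hc.1 i).1) (fun j => (hd.1 j).1)
      (hc.2.trans hd.2.symm)
  have hEu : ∀ i j, E i j ∈ Icc 0 u := fun i j =>
    ⟨hE₀ i j, (single_le_sum (fun j _ => hE₀ i j) (mem_univ j)).trans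
      ((hrow i).trans_le (hc.1 i).2)⟩
  have hmrow : ∀ i, m (c i) = ∑ j, m (E i j) := fun i => by
    rw [← hrow i, hm.m_add.map_sum (fun j _ => hE₀ i j) ((hrow i).trans_le (hc.1 i).2)]
  have hmcol : ∀ j, m (d j) = ∑ i, m (E i j) := fun j => by
    rw [← hcol j, hm.m_add.map_sum (fun i _ => hE₀ i j) ((hcol j).trans_le (hd.1 j).2)]
  have htotal : ∑ i, ∑ j, m (E i j) = 1 := by
    rw [← hm.m_unit, ← hc.2, hm.m_add.map_sum (fun i _ => (hc.1 i).1) hc.2.le]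
    exact sum_congr rfl fun i _ => (hmrow i).symm
  refine ⟨N * N', flattenFin E, ⟨fun x => hEu _ _, ?_⟩,
    funext hrow ▸ refines_flattenFin_rows E, funext hcol ▸ refines_flattenFin_cols E, ?_⟩
  · exact (sum_flattenFin E id).trans ((sum_congr rfl fun i _ => hrow i).trans hc.2)
  · rw [Ent, Ent, Ent, sum_flattenFin E fun x => negMulLog (m x)]
    simp only [hmrow, hmcol]
    exact sum_sum_negMulLog_le_add _ (fun i j => (hm.m_mem _ (hEu i j)).1) htotal

theorem IsDynamicalSystem.refines_iterate (hs : IsDynamicalSystem u m τ) {N l : ℕ}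
    {d : Fin N → G} (hd : IsPartition u d) (h : Refines d fun i => τ^[l] (a i)) (n : ℕ) :
    Refines (τ^[n] ∘ d) fun i => τ^[n + l] (a i) := by
  simpa only [iterate_add_apply, comp_def] using h.map hd (hs.iterate n).τ_add

theorem refinementEntropies_nonempty (hs : IsDynamicalSystem u m τ) (ha : IsPartition u a) :
    ∀ n, (refinementEntropies u m τ a n).Nonempty
  | 0 => ⟨_, k, a, ha, fun _ h => absurd h (Nat.not_lt_zero _), rfl⟩
  | n + 1 => by
    obtain ⟨_, N, c, hc, hcr, -⟩ := refinementEntropies_nonempty hs ha n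
    have han : IsPartition u fun i => τ^[n] (a i) :=
      ha.map (hs.iterate n).τ_add (hs.iterate n).τ_mapsTo (hs.iterate n).τ_unit
    obtain ⟨M, e, he, hec, hea, -⟩ := hc.exists_common_refinement hs.toIsState han
    refine ⟨_, M, e, he, fun l hl => ?_, rfl⟩
    rcases Nat.lt_succ_iff_lt_or_eq.mp hl with hl | rfl
    · exact hec.trans (hcr l hl)
    · exact hea

theorem Hn_add_le (hs : IsDynamicalSystem u m τ) (ha : IsPartition u a) (n n' : ℕ) :
    Hn u m τ a (n + n') ≤ Hn u m τ a n + Hn u m τ a n' := by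
  have hne := refinementEntropies_nonempty hs ha
  have hbdd := refinementEntropies_bddBelow (τ := τ) (a := a) hs.m_mem
  rw [Hn_eq_sInf n, Hn_eq_sInf n', ← csInf_add (hne n) (hbdd n) (hne n') (hbdd n')]
  refine le_csInf ((hne n).add (hne n')) ?_
  rintro _ ⟨_, ⟨N, c, hc, hcr, rfl⟩, _, ⟨N', d, hd, hdr, rfl⟩, rfl⟩
  have hd' := hd.map (hs.iterate n).τ_add (hs.iterate n).τ_mapsTo (hs.iterate n).τ_unit
  obtain ⟨M, e, he, hec, hed, hent⟩ := hc.exists_common_refinement hs.toIsState hd'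
  have her : ∀ l < n + n', Refines e fun i => τ^[l] (a i) := by
    intro l hl
    rcases lt_or_ge l n with hln | hnl
    · exact hec.trans (hcr l hln)
    · obtain ⟨l', rfl⟩ := Nat.exists_eq_add_of_le hnl
      exact hed.trans (hs.refines_iterate hd (hdr l' (by omega)) n)
  calc Hn u m τ a (n + n') ≤ Ent m e := csInf_le (hbdd _) ⟨M, e, he, her, rfl⟩
    _ ≤ Ent m c + Ent m (τ^[n] ∘ d) := hent
    _ = Ent m c + Ent m d := by rw [Ent_comp (hs.iterate n).m_τ hd]

end Partitions

/-- The sequence `Hₙ(A,τ)` is subadditive, hence `(1/n)·Hₙ(A,τ)` converges. -/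
theorem Hn_subadditive_and_limit_exists {G : Type*} [Lattice G] [AddCommGroup G]
    [CovariantClass G G (· + ·) (· ≤ ·)]
    (u : G) (m : G → ℝ) (τ : G → G)
    (hm01 : ∀ a ∈ Set.Icc 0 u, m a ∈ Set.Icc (0 : ℝ) 1)
    (hm_add : ∀ b c : G, b ∈ Set.Icc 0 u → c ∈ Set.Icc 0 u → b + c ∈ Set.Icc 0 u →
      m (b + c) = m b + m c)
    (hτ_add : ∀ b c : G, b ∈ Set.Icc 0 u → c ∈ Set.Icc 0 u → b + c ∈ Set.Icc 0 u →
      τ (b + c) = τ b + τ c)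
    (hτ_mem : ∀ a ∈ Set.Icc 0 u, τ a ∈ Set.Icc 0 u)
    (hτu : τ u = u) (hmu : m u = 1)
    (hmτ : ∀ a ∈ Set.Icc 0 u, m (τ a) = m a)
    {k : ℕ} (a : Fin k → G) (hA : IsPartition u a) :
    (∀ n m' : ℕ, 1 ≤ n → 1 ≤ m' →
        Hn u m τ a (n + m') ≤ Hn u m τ a n + Hn u m τ a m') ∧
      ∃ L : ℝ, Tendsto (fun n : ℕ => Hn u m τ a n / n) atTop (nhds L) := by
  have : IsOrderedAddMonoid G := { add_le_add_left := fun _ _ h c => add_le_add_left h c }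
  have hs : IsDynamicalSystem u m τ := ⟨⟨hm01, hm_add, hmu⟩, hτ_add, hτ_mem, hτu, hmτ⟩
  have hsub : Subadditive (Hn u m τ a) := Hn_add_le hs hA
  refine ⟨fun n n' _ _ => hsub n n', hsub.lim, hsub.tendsto_lim ⟨0, ?_⟩⟩
  rintro _ ⟨n, rfl⟩
  exact div_nonneg (Hn_nonneg hm01 n) n.cast_nonneg
end
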